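/- arXiv:1401.1709 — 5 statements merged into one kernel-verified Lean document; each statement's English description precedes it below -/
import Mathlib

section
/- Let (X,d) be a regular semimetric space. Then any two distinct points of X can be separated by disjoint open balls: if x ≠ y, then there exists r > 0 such that B(x,r) ∩ B(y,r) = ∅, where B(p,r) = { q ∈ X : d(p,q) < r }. In particular, the topology induced by the open balls is Hausdorff. -/
open Filter Topology

/-- A semimetric on `X`: a symmetric nonnegative function vanishing exactly on the diagonal. -/
def IsSemimetric {X : Type*} (d : X → X → NNReal) : Prop :=
  (∀ x y, d x y = d y x) ∧ (∀ x y, d x y = 0 ↔ x = y)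

/-- The basic triangle function `Φ_d(u,v) = sup { d x y | ∃ p, d p x ≤ u ∧ d p y ≤ v }`. -/
noncomputable def basicTriangle {X : Type*} (d : X → X → NNReal) (u v : ENNReal) : ENNReal :=
  sSup {w : ENNReal | ∃ x y p : X, w = (d x y : ENNReal) ∧ (d p x : ENNReal) ≤ u ∧ (d p y : ENNReal) ≤ v}

/-- `Φ` is a triangle function for `d`: symmetric, monotone increasing in both arguments,
`Φ(0,0) = 0`, and the generalized triangle inequality holds. -/
def IsTriangleFun {X : Type*} (d : X → X → NNReal) (Φ : ENNReal → ENNReal → ENNReal) : Prop :=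
  (∀ u v, Φ u v = Φ v u) ∧
  (∀ v, Monotone fun u => Φ u v) ∧
  (∀ u, Monotone fun v => Φ u v) ∧
  Φ 0 0 = 0 ∧
  ∀ x y z : X, (d x y : ENNReal) ≤ Φ (d x z) (d y z)

/-- A semimetric is regular if its basic triangle function is continuous at the origin. -/
def IsRegularSemimetric {X : Type*} (d : X → X → NNReal) : Prop :=
  ContinuousAt (fun p : ENNReal × ENNReal => basicTriangle d p.1 p.2) (0, 0)

/-- Convergence of a sequence with respect to a semimetric. -/
def SConv {X : Type*} (d : X → X → NNReal) (x : ℕ → X) (a : X) : Prop :=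
  Tendsto (fun n => d (x n) a) atTop (𝓝 0)

/-- Cauchy property of a sequence with respect to a semimetric. -/
def SCauchy {X : Type*} (d : X → X → NNReal) (x : ℕ → X) : Prop :=
  ∀ ε : NNReal, 0 < ε → ∃ N, ∀ n m, N ≤ n → N ≤ m → d (x n) (x m) < ε

/-- Completeness of a semimetric space: every Cauchy sequence converges. -/
def SComplete {X : Type*} (d : X → X → NNReal) : Prop :=
  ∀ x : ℕ → X, SCauchy d x → ∃ a, SConv d x a

/-- The smallest Lipschitz modulus `L_{d₁,d₂}(t) = sup { d₁ x y | d₂ x y ≤ t }`. -/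
noncomputable def Lmod {X : Type*} (d₁ d₂ : X → X → NNReal) (t : ENNReal) : ENNReal :=
  sSup {w : ENNReal | ∃ x y : X, w = (d₁ x y : ENNReal) ∧ (d₂ x y : ENNReal) ≤ t}

/-- Equivalence of semimetrics: both minimal Lipschitz moduli tend to `0` at `0⁺`. -/
def SEquiv {X : Type*} (d₁ d₂ : X → X → NNReal) : Prop :=
  Tendsto (Lmod d₁ d₂) (𝓝[>] (0 : ENNReal)) (𝓝 0) ∧
  Tendsto (Lmod d₂ d₁) (𝓝[>] (0 : ENNReal)) (𝓝 0)

/-- A comparison function: monotone increasing with iterates tending to zero pointwise. -/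
def IsComparison (φ : NNReal → NNReal) : Prop :=
  Monotone φ ∧ ∀ t : NNReal, Tendsto (fun n => φ^[n] t) atTop (𝓝 0)

/-- `T` is a `φ`-contraction with respect to the semimetric `d`. -/
def IsPhiContraction {X : Type*} (d : X → X → NNReal) (φ : NNReal → NNReal) (T : X → X) : Prop :=
  ∀ x y, d (T x) (T y) ≤ φ (d x y)

/-! Since `Φ_d(0,0) = 0`, regularity gives a radius `r > 0` with `Φ_d(r,r) < d(x,y)`; a common
point `q` of the two `r`-balls would witness `d(x,y) ≤ Φ_d(r,r)`. -/

section BasicTriangle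

variable {X : Type*} {d : X → X → NNReal}

theorem basicTriangle_zero_zero (hd : ∀ x y, d x y = 0 ↔ x = y) : basicTriangle d 0 0 = 0 := by
  refine le_antisymm (sSup_le ?_) zero_le
  rintro w ⟨a, b, p, rfl, ha, hb⟩
  obtain rfl : p = a := (hd p a).1 (by exact_mod_cast nonpos_iff_eq_zero.1 ha)
  obtain rfl : p = b := (hd p b).1 (by exact_mod_cast nonpos_iff_eq_zero.1 hb)
  simp [(hd p p).2 rfl]

theorem le_basicTriangle {x y p : X} {u v : ENNReal} (hx : (d p x : ENNReal) ≤ u)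
    (hy : (d p y : ENNReal) ≤ v) : (d x y : ENNReal) ≤ basicTriangle d u v :=
  le_sSup ⟨x, y, p, rfl, hx, hy⟩

theorem IsRegularSemimetric.tendsto_basicTriangle_diag (hd : ∀ x y, d x y = 0 ↔ x = y)
    (hreg : IsRegularSemimetric d) :
    Tendsto (fun u : ENNReal => basicTriangle d u u) (𝓝 0) (𝓝 0) := by
  have hdiag : Tendsto (fun u : ENNReal => (u, u)) (𝓝 0) (𝓝 (0, 0)) :=
    tendsto_id.prodMk_nhds tendsto_id
  have h := hreg.tendsto.comp hdiag
  rwa [basicTriangle_zero_zero hd] at h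

theorem IsRegularSemimetric.exists_pos_basicTriangle_lt (hd : ∀ x y, d x y = 0 ↔ x = y)
    (hreg : IsRegularSemimetric d) {c : ENNReal} (hc : 0 < c) :
    ∃ r : NNReal, 0 < r ∧ basicTriangle d r r < c := by
  have hcoe : Tendsto (fun r : NNReal => (r : ENNReal)) (𝓝[>] 0) (𝓝 0) :=
    (ENNReal.continuous_coe.tendsto 0).mono_left nhdsWithin_le_nhds
  have hsmall := (hreg.tendsto_basicTriangle_diag hd).comp hcoe |>.eventually (gt_mem_nhds hc)
  exact (eventually_mem_nhdsWithin.and hsmall).exists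

end BasicTriangle

theorem regular_separation_general {X : Type*}
    (d : X → X → NNReal) (hd : IsSemimetric d) (hreg : IsRegularSemimetric d)
    (x y : X) (hxy : x ≠ y) :
    ∃ r : NNReal, 0 < r ∧ {q : X | d x q < r} ∩ {q : X | d y q < r} = ∅ := by
  have hdxy : (0 : ENNReal) < d x y := by
    exact_mod_cast pos_iff_ne_zero.2 fun h => hxy ((hd.2 x y).1 h)
  obtain ⟨r, hr, hΦ⟩ := hreg.exists_pos_basicTriangle_lt hd.2 hdxy
  refine ⟨r, hr, Set.eq_empty_iff_forall_notMem.2 fun q ⟨hqx, hqy⟩ => hΦ.not_ge ?_⟩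
  exact le_basicTriangle (p := q) (by rw [hd.1]; exact_mod_cast hqx.le)
    (by rw [hd.1]; exact_mod_cast hqy.le)

theorem regular_separation {X : Type*} [Nonempty X]
    (d : X → X → NNReal) (hd : IsSemimetric d) (hreg : IsRegularSemimetric d)
    (x y : X) (hxy : x ≠ y) :
    ∃ r : NNReal, 0 < r ∧ {q : X | d x q < r} ∩ {q : X | d y q < r} = ∅ :=
  regular_separation_general d hd hreg x y hxy
end

section
/- A semimetric space (X,d) is regular if and only if lim_{r → 0⁺} sup_{p ∈ X} diam B(p,r) = 0, where B(p,r) = { q ∈ X : d(p,q) < r } and diam B(p,r) = sup{ d(x,y) : x, y ∈ B(p,r) }. -/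
open Filter Topology

/-! A centre `p` witnessing `Φ(u, v)` with `u, v < r` puts both points in the open ball `B(p, r)`,
so `Φ(u, v) ≤ D(r) ≤ Φ(r, r)` for the supremum `D(r)` of the diameters of the balls of radius `r`.
Since `Φ(0, 0) = 0`, regularity (`Φ → 0` at the origin) is then equivalent to `D(r) → 0`. -/

section BallDiam

variable {X : Type*} {d : X → X → NNReal}

noncomputable def supDiamBall (d : X → X → NNReal) (r : NNReal) : ENNReal :=
  ⨆ p : X, sSup {w : ENNReal | ∃ x y : X, w = (d x y : ENNReal) ∧ d p x < r ∧ d p y < r}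

theorem supDiamBall_le_basicTriangle (r : NNReal) : supDiamBall d r ≤ basicTriangle d r r := by
  refine iSup_le fun p => sSup_le ?_
  rintro w ⟨x, y, hw, hx, hy⟩
  exact le_sSup ⟨x, y, p, hw, by exact_mod_cast hx.le, by exact_mod_cast hy.le⟩

theorem basicTriangle_le_supDiamBall {u v : ENNReal} {r : NNReal} (hu : u < r) (hv : v < r) :
    basicTriangle d u v ≤ supDiamBall d r := by
  refine sSup_le ?_
  rintro w ⟨x, y, p, hw, hx, hy⟩
  exact le_iSup_of_le p (le_sSup ⟨x, y, hw, by exact_mod_cast hx.trans_lt hu,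
    by exact_mod_cast hy.trans_lt hv⟩)

theorem isRegularSemimetric_iff_tendsto (hd : ∀ x y, d x y = 0 ↔ x = y) :
    IsRegularSemimetric d ↔
      Tendsto (fun q : ENNReal × ENNReal => basicTriangle d q.1 q.2) (𝓝 (0, 0)) (𝓝 0) := by
  rw [IsRegularSemimetric, ContinuousAt, basicTriangle_zero_zero hd]

theorem tendsto_supDiamBall_of_tendsto_basicTriangle
    (h : Tendsto (fun q : ENNReal × ENNReal => basicTriangle d q.1 q.2) (𝓝 (0, 0)) (𝓝 0)) :
    Tendsto (supDiamBall d) (𝓝[>] 0) (𝓝 0) := by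
  have hcoe : Tendsto (fun r : NNReal => (r : ENNReal)) (𝓝[>] 0) (𝓝 0) :=
    (ENNReal.continuous_coe.tendsto' 0 0 ENNReal.coe_zero).mono_left nhdsWithin_le_nhds
  exact tendsto_of_tendsto_of_tendsto_of_le_of_le tendsto_const_nhds
    (h.comp (hcoe.prodMk_nhds hcoe)) (fun _ => zero_le) supDiamBall_le_basicTriangle

theorem tendsto_basicTriangle_of_tendsto_supDiamBall
    (h : Tendsto (supDiamBall d) (𝓝[>] 0) (𝓝 0)) :
    Tendsto (fun q : ENNReal × ENNReal => basicTriangle d q.1 q.2) (𝓝 (0, 0)) (𝓝 0) := by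
  refine ENNReal.tendsto_nhds_zero.2 fun ε hε => ?_
  obtain ⟨r, hrε, hr⟩ := ((ENNReal.tendsto_nhds_zero.1 h ε hε).and self_mem_nhdsWithin).exists
  have hr' : (0 : ENNReal) < r := by exact_mod_cast hr
  filter_upwards [(gt_mem_nhds hr').prod_nhds (gt_mem_nhds hr')] with q hq
  exact (basicTriangle_le_supDiamBall hq.1 hq.2).trans hrε

end BallDiam

theorem regular_iff_diam_balls_general {X : Type*}
    (d : X → X → NNReal) (hd : IsSemimetric d) :
    IsRegularSemimetric d ↔
      Tendsto (fun r : NNReal =>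
          ⨆ p : X, sSup {w : ENNReal | ∃ x y : X, w = (d x y : ENNReal) ∧ d p x < r ∧ d p y < r})
        (𝓝[>] (0 : NNReal)) (𝓝 0) := by
  rw [isRegularSemimetric_iff_tendsto hd.2]
  exact ⟨tendsto_supDiamBall_of_tendsto_basicTriangle,
    tendsto_basicTriangle_of_tendsto_supDiamBall⟩

theorem regular_iff_diam_balls {X : Type*} [Nonempty X]
    (d : X → X → NNReal) (hd : IsSemimetric d) :
    IsRegularSemimetric d ↔
      Tendsto (fun r : NNReal =>
          ⨆ p : X, sSup {w : ENNReal | ∃ x y : X, w = (d x y : ENNReal) ∧ d p x < r ∧ d p y < r})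
        (𝓝[>] (0 : NNReal)) (𝓝 0) :=
  regular_iff_diam_balls_general d hd
end

section
/- Let d₁ and d₂ be semimetrics on a nonempty set X. Then the basic triangle functions satisfy Φ_{d₁}(u,v) ≤ L_{d₁,d₂}( Φ_{d₂}( L_{d₂,d₁}(u), L_{d₂,d₁}(v) ) ) for all u, v in the extended nonnegative reals. -/
open Filter Topology

section

variable {X : Type*}

theorem coe_le_Lmod {d₁ d₂ : X → X → NNReal} {t : ENNReal} {x y : X}
    (h : (d₂ x y : ENNReal) ≤ t) : (d₁ x y : ENNReal) ≤ Lmod d₁ d₂ t :=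
  le_sSup ⟨x, y, rfl, h⟩

theorem coe_le_basicTriangle {d : X → X → NNReal} {u v : ENNReal} {x y p : X}
    (hx : (d p x : ENNReal) ≤ u) (hy : (d p y : ENNReal) ≤ v) :
    (d x y : ENNReal) ≤ basicTriangle d u v :=
  le_sSup ⟨x, y, p, rfl, hx, hy⟩

theorem basicTriangle_le {d : X → X → NNReal} {u v w : ENNReal}
    (h : ∀ x y p, (d p x : ENNReal) ≤ u → (d p y : ENNReal) ≤ v → (d x y : ENNReal) ≤ w) :
    basicTriangle d u v ≤ w :=
  sSup_le <| by
    rintro _ ⟨x, y, p, rfl, hx, hy⟩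
    exact h x y p hx hy

end

theorem basicTriangle_le_Lmod_general {X : Type*}
    (d₁ d₂ : X → X → NNReal) :
    ∀ u v : ENNReal,
      basicTriangle d₁ u v ≤ Lmod d₁ d₂ (basicTriangle d₂ (Lmod d₂ d₁ u) (Lmod d₂ d₁ v)) :=
  fun _ _ => basicTriangle_le fun _ _ _ hx hy =>
    coe_le_Lmod (coe_le_basicTriangle (coe_le_Lmod hx) (coe_le_Lmod hy))

theorem basicTriangle_le_Lmod {X : Type*} [Nonempty X]
    (d₁ d₂ : X → X → NNReal) (h₁ : IsSemimetric d₁) (h₂ : IsSemimetric d₂) :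
    ∀ u v : ENNReal,
      basicTriangle d₁ u v ≤ Lmod d₁ d₂ (basicTriangle d₂ (Lmod d₂ d₁ u) (Lmod d₂ d₁ v)) :=
  basicTriangle_le_Lmod_general d₁ d₂
end

section
/- Let (X,d) be a semimetric space whose semimetric is self-continuous, i.e., d(x_n,y_n) → d(x,y) whenever d(x_n,x) → 0 and d(y_n,y) → 0. Let φ : ℝ₊ → ℝ₊ be a comparison function and let (T_n) be a sequence of φ-contractions of X converging pointwise to a map T₀ : X → X. Then T₀ is a φ-contraction. -/
open Filter Topology

def IsSelfContinuous {X : Type*} (d : X → X → NNReal) : Prop :=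
  ∀ (x y : ℕ → X) (a b : X), SConv d x a → SConv d y b →
    Tendsto (fun n => d (x n) (y n)) atTop (𝓝 (d a b))

theorem IsSelfContinuous.le_of_forall_le {X : Type*} {d : X → X → NNReal}
    (hself : IsSelfContinuous d) {x y : ℕ → X} {a b : X} (hx : SConv d x a) (hy : SConv d y b)
    {c : NNReal} (hc : ∀ n, d (x n) (y n) ≤ c) : d a b ≤ c :=
  le_of_tendsto' (hself x y a b hx hy) hc

theorem pointwise_limit_phiContraction_general {X : Type*}
    (d : X → X → NNReal)
    (hself : ∀ (x y : ℕ → X) (a b : X), SConv d x a → SConv d y b →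
      Tendsto (fun n => d (x n) (y n)) atTop (𝓝 (d a b)))
    (φ : NNReal → NNReal)
    (T : ℕ → X → X) (hT : ∀ n, IsPhiContraction d φ (T n))
    (T₀ : X → X)
    (hconv : ∀ x : X, Tendsto (fun n => d (T n x) (T₀ x)) atTop (𝓝 0)) :
    IsPhiContraction d φ T₀ := fun x y =>
  IsSelfContinuous.le_of_forall_le hself (hconv x) (hconv y) fun n => hT n x y

theorem pointwise_limit_phiContraction {X : Type*} [Nonempty X]
    (d : X → X → NNReal) (hd : IsSemimetric d)
    (hself : ∀ (x y : ℕ → X) (a b : X), SConv d x a → SConv d y b →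
      Tendsto (fun n => d (x n) (y n)) atTop (𝓝 (d a b)))
    (φ : NNReal → NNReal) (hφ : IsComparison φ)
    (T : ℕ → X → X) (hT : ∀ n, IsPhiContraction d φ (T n))
    (T₀ : X → X)
    (hconv : ∀ x : X, Tendsto (fun n => d (T n x) (T₀ x)) atTop (𝓝 0)) :
    IsPhiContraction d φ T₀ :=
  pointwise_limit_phiContraction_general d hself φ T hT T₀ hconv
end

section
/- Let c ≥ 1 and let (X,d) be a complete c-relaxed metric space, i.e., a complete semimetric space satisfying the c-relaxed triangle inequality d(x,y) ≤ c(d(x,z) + d(z,y)) for all x,y,z ∈ X. If φ : ℝ₊ → ℝ₊ is a comparison function, then every φ-contraction T : X → X has a unique fixed point. The same conclusion holds if instead (X,d) is a complete c-inframetric space, i.e., d(x,y) ≤ c·max{d(x,z), d(z,y)} for all x,y,z ∈ X. -/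
open Filter Topology

/-!
Matkowski's argument. The iterates of a `φ`-contraction bring any two orbits together, since
`d(Tⁿx, Tⁿy) ≤ φⁿ(d(x, y)) → 0`. Given `η > 0`, pick `p > 0` with `c φᵖ(η) ≤ η / 2`; once `n` is so
large that the first `p` steps of the orbit of `Tⁿx` stay within `η` of it and `c d(Tⁿx, Tᵖ⁺ⁿx) ≤ η / 2`,
the relaxed triangle inequality through `Tᵖ⁺ⁿx` shows by strong induction on `k` that the whole orbit
stays within `η`: `d(Tⁿx, Tᵏ⁺ᵖ⁺ⁿx) ≤ c (η / 2 + φᵖ(d(Tⁿx, Tᵏ⁺ⁿx))) ≤ η`. So orbits are Cauchy, and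
their limits are fixed points. A `c`-inframetric is `c`-relaxed, since `max a b ≤ a + b`.
-/

namespace IsComparison

variable {φ : NNReal → NNReal}

theorem eq_zero_of_le_apply (hφ : IsComparison φ) {t : NNReal} (ht : t ≤ φ t) : t = 0 := by
  have hmono : Monotone fun n => φ^[n] t := by
    refine monotone_nat_of_le_succ fun n => ?_
    rw [Function.iterate_succ_apply]
    exact hφ.1.iterate n ht
  exact nonpos_iff_eq_zero.1 (ge_of_tendsto' (hφ.2 t) fun n => hmono n.zero_le)

theorem apply_le (hφ : IsComparison φ) (t : NNReal) : φ t ≤ t := by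
  by_contra! h
  have hφ0 : φ 0 = 0 := hφ.eq_zero_of_le_apply (hφ.1 zero_le)
  rw [hφ.eq_zero_of_le_apply h.le, hφ0] at h
  exact lt_irrefl 0 h

end IsComparison

namespace IsPhiContraction

variable {X : Type*} {d : X → X → NNReal} {φ : NNReal → NNReal} {T : X → X}

theorem iterate (hT : IsPhiContraction d φ T) (hφ : Monotone φ) (n : ℕ) :
    IsPhiContraction d φ^[n] T^[n] := by
  induction n with
  | zero => intro x y; simp
  | succ n ih =>
    intro x y
    simp only [Function.iterate_succ_apply']
    exact (hT _ _).trans (hφ (ih x y))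

theorem tendsto_dist_iterate (hT : IsPhiContraction d φ T) (hφ : IsComparison φ) (x y : X) :
    Tendsto (fun n => d (T^[n] x) (T^[n] y)) atTop (𝓝 0) :=
  tendsto_of_tendsto_of_tendsto_of_le_of_le tendsto_const_nhds (hφ.2 (d x y))
    (fun _ => zero_le) fun n => hT.iterate hφ.1 n x y

theorem eq_of_isFixedPt (hT : IsPhiContraction d φ T) (hφ : IsComparison φ)
    (hd : ∀ x y, d x y = 0 → x = y) {a b : X} (ha : T a = a) (hb : T b = b) : a = b := by
  refine hd a b (hφ.eq_zero_of_le_apply ?_)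
  calc d a b = d (T a) (T b) := by rw [ha, hb]
    _ ≤ φ (d a b) := hT a b

end IsPhiContraction

theorem sCauchy_of_eventually_forall_ge_le {X : Type*} {d : X → X → NNReal}
    (hsymm : ∀ x y, d x y = d y x) {u : ℕ → X}
    (hu : ∀ η : NNReal, 0 < η → ∀ᶠ n in atTop, ∀ m ≥ n, d (u n) (u m) ≤ η) : SCauchy d u := by
  intro ε hε
  obtain ⟨N, hN⟩ := eventually_atTop.1 (hu (ε / 2) (half_pos hε))
  refine ⟨N, fun n m hn hm => ?_⟩
  have hhalf : ε / 2 < ε := NNReal.half_lt_self hε.ne'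
  rcases le_total n m with h | h
  · exact (hN n hn m h).trans_lt hhalf
  · rw [hsymm]
    exact (hN m hm n h).trans_lt hhalf

section Relaxed

variable {X : Type*} {c : NNReal} {d : X → X → NNReal} {φ : NNReal → NNReal} {T : X → X}

theorem dist_iterate_le_of_forall_le_of_le
    (htri : ∀ x y z, d x y ≤ c * (d x z + d z y)) (hφ : Monotone φ)
    (hT : IsPhiContraction d φ T) {a : X} {p : ℕ} (hp : 0 < p) {η : NNReal}
    (hnear : ∀ j ≤ p, d a (T^[j] a) ≤ η) (hfar : c * (d a (T^[p] a) + φ^[p] η) ≤ η) (k : ℕ) :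
    d a (T^[k] a) ≤ η := by
  induction k using Nat.strong_induction_on with
  | _ k ih =>
    rcases le_or_gt k p with hk | hk
    · exact hnear k hk
    obtain ⟨m, rfl⟩ : ∃ m, k = p + m := ⟨k - p, by omega⟩
    calc d a (T^[p + m] a) ≤ c * (d a (T^[p] a) + d (T^[p] a) (T^[p] (T^[m] a))) := by
          rw [← Function.iterate_add_apply]; exact htri _ _ _
      _ ≤ c * (d a (T^[p] a) + φ^[p] η) := by
          gcongr
          exact (hT.iterate hφ p a _).trans (hφ.iterate p (ih m (by omega)))
      _ ≤ η := hfar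

theorem eventually_forall_dist_iterate_le (htri : ∀ x y z, d x y ≤ c * (d x z + d z y))
    (hφ : IsComparison φ) (hT : IsPhiContraction d φ T) (x : X) {η : NNReal} (hη : 0 < η) :
    ∀ᶠ n in atTop, ∀ k, d (T^[n] x) (T^[k] (T^[n] x)) ≤ η := by
  have horbit : ∀ j, Tendsto (fun n => d (T^[n] x) (T^[j] (T^[n] x))) atTop (𝓝 0) := fun j => by
    simpa only [Function.Commute.iterate_iterate_self T j _ x] using hT.tendsto_dist_iterate hφ x _
  have hφη : Tendsto (fun p => c * φ^[p] η) atTop (𝓝 0) := by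
    simpa using (hφ.2 η).const_mul c
  obtain ⟨p₀, hp₀⟩ := (hφη.eventually (eventually_le_nhds (half_pos hη))).exists_forall_of_atTop
  set p := p₀ + 1
  have hnear : ∀ᶠ n in atTop, ∀ j ∈ Set.Iic p, d (T^[n] x) (T^[j] (T^[n] x)) ≤ η :=
    (eventually_all_finite (Set.finite_Iic p)).2 fun j _ =>
      (horbit j).eventually (eventually_le_nhds hη)
  have hfar : ∀ᶠ n in atTop, c * d (T^[n] x) (T^[p] (T^[n] x)) ≤ η / 2 := by
    have hlim : Tendsto (fun n => c * d (T^[n] x) (T^[p] (T^[n] x))) atTop (𝓝 0) := by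
      simpa using (horbit p).const_mul c
    exact hlim.eventually (eventually_le_nhds (half_pos hη))
  filter_upwards [hnear, hfar] with n hn hf
  refine dist_iterate_le_of_forall_le_of_le htri hφ.1 hT p₀.succ_pos hn ?_
  calc c * (d (T^[n] x) (T^[p] (T^[n] x)) + φ^[p] η)
      = c * d (T^[n] x) (T^[p] (T^[n] x)) + c * φ^[p] η := mul_add _ _ _
    _ ≤ η / 2 + η / 2 := add_le_add hf (hp₀ p p₀.le_succ)
    _ = η := add_halves η

theorem sCauchy_iterate (htri : ∀ x y z, d x y ≤ c * (d x z + d z y))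
    (hsymm : ∀ x y, d x y = d y x) (hφ : IsComparison φ) (hT : IsPhiContraction d φ T) (x : X) :
    SCauchy d fun n => T^[n] x := by
  refine sCauchy_of_eventually_forall_ge_le hsymm fun η hη => ?_
  filter_upwards [eventually_forall_dist_iterate_le htri hφ hT x hη] with n hn m hm
  obtain ⟨k, rfl⟩ : ∃ k, m = k + n := ⟨m - n, by omega⟩
  rw [Function.iterate_add_apply]
  exact hn k

theorem isFixedPt_of_sConv_iterate (htri : ∀ x y z, d x y ≤ c * (d x z + d z y))
    (hsymm : ∀ x y, d x y = d y x) (hd : ∀ x y, d x y = 0 → x = y)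
    (hT : ∀ x y, d (T x) (T y) ≤ d x y) {x a : X} (ha : SConv d (fun n => T^[n] x) a) :
    T a = a := by
  have hbound : ∀ n, d (T a) a ≤ c * (d (T^[n] x) a + d (T^[n + 1] x) a) := fun n =>
    calc d (T a) a ≤ c * (d (T a) (T^[n + 1] x) + d (T^[n + 1] x) a) := htri _ _ _
      _ ≤ c * (d (T^[n] x) a + d (T^[n + 1] x) a) := by
          rw [Function.iterate_succ_apply', hsymm (T a)]
          gcongr
          exact hT _ _
  have hlim : Tendsto (fun n => c * (d (T^[n] x) a + d (T^[n + 1] x) a)) atTop (𝓝 0) := by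
    simpa using (ha.add (ha.comp (tendsto_add_atTop_nat 1))).const_mul c
  exact hd _ _ (nonpos_iff_eq_zero.1 (ge_of_tendsto' hlim hbound))

theorem existsUnique_fixedPt_of_relaxed [Nonempty X]
    (htri : ∀ x y z, d x y ≤ c * (d x z + d z y)) (hd : IsSemimetric d) (hcomp : SComplete d)
    (hφ : IsComparison φ) (hT : IsPhiContraction d φ T) : ∃! a : X, T a = a := by
  obtain ⟨x⟩ := ‹Nonempty X›
  have heq : ∀ x y, d x y = 0 → x = y := fun x y => (hd.2 x y).1
  obtain ⟨a, ha⟩ := hcomp _ (sCauchy_iterate htri hd.1 hφ hT x)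
  have hTa : T a = a :=
    isFixedPt_of_sConv_iterate htri hd.1 heq (fun x y => (hT x y).trans (hφ.apply_le _)) ha
  exact ⟨a, hTa, fun b hb => hT.eq_of_isFixedPt hφ heq hb hTa⟩

end Relaxed

theorem matkowski_relaxed_and_inframetric_general {X : Type*} [Nonempty X]
    (c : NNReal)
    (d : X → X → NNReal) (hd : IsSemimetric d) (hcomp : SComplete d)
    (φ : NNReal → NNReal) (hφ : IsComparison φ)
    (T : X → X) (hT : IsPhiContraction d φ T) :
    ((∀ x y z : X, d x y ≤ c * (d x z + d z y)) → ∃! x₀ : X, T x₀ = x₀) ∧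
      ((∀ x y z : X, d x y ≤ c * max (d x z) (d z y)) → ∃! x₀ : X, T x₀ = x₀) := by
  have relaxed : (∀ x y z : X, d x y ≤ c * (d x z + d z y)) → ∃! x₀ : X, T x₀ = x₀ :=
    fun htri => existsUnique_fixedPt_of_relaxed htri hd hcomp hφ hT
  refine ⟨relaxed, fun hinfra => relaxed fun x y z => (hinfra x y z).trans ?_⟩
  gcongr
  exact max_le_add_of_nonneg zero_le zero_le

theorem matkowski_relaxed_and_inframetric {X : Type*} [Nonempty X]
    (c : NNReal) (hc : 1 ≤ c)
    (d : X → X → NNReal) (hd : IsSemimetric d) (hcomp : SComplete d)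
    (φ : NNReal → NNReal) (hφ : IsComparison φ)
    (T : X → X) (hT : IsPhiContraction d φ T) :
    ((∀ x y z : X, d x y ≤ c * (d x z + d z y)) → ∃! x₀ : X, T x₀ = x₀) ∧
      ((∀ x y z : X, d x y ≤ c * max (d x z) (d z y)) → ∃! x₀ : X, T x₀ = x₀) :=
  matkowski_relaxed_and_inframetric_general c d hd hcomp φ hφ T hT
end
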